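/- Let {S, T, E, N, x} be a data set as above with P := M_{F^S}^{[*]} M_{F^S} ≥ x x*, and assume in addition that P is positive definite (i.e., invertible). Define the kernel K̃_S(z,ζ) = K_S(z,ζ) − F^S(z) P^{-1} F^S(ζ)*, whose reproducing kernel Hilbert space H(K̃_S) is the orthogonal complement in H(K_S) of the space N = {F^S(·)x0 : x0 ∈ X} normed by ‖F^S x0‖ = ‖P^{1/2}x0‖. Then all solutions f of the problem AIP are exactly the functions f(z) = F^S(z) P^{-1} x + h(z), where h ranges over H(K̃_S) subject to ‖h‖_{H(K̃_S)} ≤ sqrt(1 − ‖P^{-1/2} x‖²). -/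
import Mathlib


open ContinuousLinearMap Metric
open scoped InnerProductSpace ComplexOrder

noncomputable section

/-- The de Branges–Rovnyak kernel `K_S(z,ζ) = (I − S(z)S(ζ)*)/(1 − z ζ̄)`. -/
def dbrKernel {U Y : Type*}
    [NormedAddCommGroup U] [InnerProductSpace ℂ U] [CompleteSpace U]
    [NormedAddCommGroup Y] [InnerProductSpace ℂ Y] [CompleteSpace Y]
    (S : ℂ → (U →L[ℂ] Y)) (z ζ : ℂ) : Y →L[ℂ] Y :=
  (1 - z * (starRingEnd ℂ) ζ)⁻¹ • (1 - (S z) ∘L (adjoint (S ζ)))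

/-- The operator-valued Schur class on the unit disk. -/
def IsSchur {U Y : Type*}
    [NormedAddCommGroup U] [NormedSpace ℂ U]
    [NormedAddCommGroup Y] [NormedSpace ℂ Y]
    (S : ℂ → (U →L[ℂ] Y)) : Prop :=
  AnalyticOnNhd ℂ S (ball (0:ℂ) 1) ∧ ∀ z ∈ ball (0:ℂ) 1, ‖S z‖ ≤ 1

/-- `H` (with realization map `J` and kernel elements `k`) is the reproducing kernel
Hilbert space of the de Branges–Rovnyak kernel `K_S`. -/
structure IsDBRSpace {U Y : Type*}
    [NormedAddCommGroup U] [InnerProductSpace ℂ U] [CompleteSpace U]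
    [NormedAddCommGroup Y] [InnerProductSpace ℂ Y] [CompleteSpace Y]
    (S : ℂ → (U →L[ℂ] Y)) (H : Type*) [NormedAddCommGroup H]
    [InnerProductSpace ℂ H] [CompleteSpace H]
    (J : H →ₗ[ℂ] (ℂ → Y)) (k : ℂ → Y → H) : Prop where
  ext : ∀ f g : H, (∀ z ∈ ball (0:ℂ) 1, J f z = J g z) → f = g
  kernel_eq : ∀ ζ ∈ ball (0:ℂ) 1, ∀ y : Y, ∀ z ∈ ball (0:ℂ) 1,
    J (k ζ y) z = dbrKernel S z ζ y
  reproducing : ∀ ζ ∈ ball (0:ℂ) 1, ∀ (y : Y) (f : H),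
    ⟪k ζ y, f⟫_ℂ = ⟪y, J f ζ⟫_ℂ

/-- The rank-one operator `x x* : y ↦ ⟨y, x⟩ x`. -/
def rankOne {X : Type*} [NormedAddCommGroup X] [InnerProductSpace ℂ X]
    (x : X) : X →L[ℂ] X :=
  (innerSL ℂ x).smulRight x

/-- Assume `P := M_{F^S}^{[*]} M_{F^S} ≥ x x*` and that `P` is positive
definite (invertible).  The reproducing kernel Hilbert space of the kernel
`K̃_S(z,ζ) = K_S(z,ζ) − F^S(z) P^{-1} F^S(ζ)*` is the orthogonal complement in `H(K_S)`
of `N = {F^S(·)x0 : x0 ∈ X}`.  Then the solutions of the problem `AIP` are exactly the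
functions `f = F^S P^{-1} x + h`, where `h` ranges over `H(K̃_S)` (the orthogonal
complement of `N`) subject to `‖h‖ ≤ sqrt(1 − ‖P^{-1/2} x‖²)`. -/
theorem stmt5
    {X U Y : Type*}
    [NormedAddCommGroup X] [InnerProductSpace ℂ X] [CompleteSpace X]
    [NormedAddCommGroup U] [InnerProductSpace ℂ U] [CompleteSpace U]
    [NormedAddCommGroup Y] [InnerProductSpace ℂ Y] [CompleteSpace Y]
    (S : ℂ → (U →L[ℂ] Y)) (hS : IsSchur S)
    (T : X →L[ℂ] X) (E : X →L[ℂ] Y) (N : X →L[ℂ] U) (x : X)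
    (OET : X → ℂ → Y) (ONT : X → ℂ → U)
    (hOET : ∀ x0 : X, ∀ z ∈ ball (0:ℂ) 1,
      HasSum (fun n : ℕ => z ^ n • E ((T ^ n) x0)) (OET x0 z))
    (hONT : ∀ x0 : X, ∀ z ∈ ball (0:ℂ) 1,
      HasSum (fun n : ℕ => z ^ n • N ((T ^ n) x0)) (ONT x0 z))
    (FS : ℂ → (X →L[ℂ] Y))
    (hFS : ∀ x0 : X, ∀ z ∈ ball (0:ℂ) 1, FS z x0 = OET x0 z - S z (ONT x0 z))
    (H : Type*) [NormedAddCommGroup H] [InnerProductSpace ℂ H] [CompleteSpace H]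
    (J : H →ₗ[ℂ] (ℂ → Y)) (k : ℂ → Y → H) (hH : IsDBRSpace S H J k)
    (MF : X →L[ℂ] H)
    (hMF : ∀ x0 : X, ∀ z ∈ ball (0:ℂ) 1, J (MF x0) z = FS z x0)
    (P : X →L[ℂ] X) (hP : P = adjoint MF ∘L MF)
    -- `P ≥ x x*`
    (hPx : (P - rankOne x).IsPositive)
    -- `P` is positive definite (boundedly invertible)
    (Pinv : X →L[ℂ] X) (hPinv₁ : P ∘L Pinv = 1) (hPinv₂ : Pinv ∘L P = 1) :
    ∀ f : H,
      (adjoint MF f = x ∧ ‖f‖ ≤ 1) ↔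
        (∃ h : H,
          -- `h` belongs to `H(K̃_S) = H(K_S) ⊖ N`
          (∀ x0 : X, ⟪MF x0, h⟫_ℂ = 0) ∧
          -- norm constraint `‖h‖ ≤ sqrt(1 − ‖P^{-1/2}x‖²)`, where `‖P^{-1/2}x‖² = ⟨P^{-1}x, x⟩`
          ‖h‖ ≤ Real.sqrt (1 - RCLike.re (⟪x, Pinv x⟫_ℂ)) ∧
          f = MF (Pinv x) + h) := by
  intro f
  have hPapp : ∀ v : X, ContinuousLinearMap.adjoint MF (MF v) = P v := by
    intro v; rw [hP]; rfl
  have hPPinv : ∀ v : X, P (Pinv v) = v := by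
    intro v
    have := congrArg (fun A : X →L[ℂ] X => A v) hPinv₁
    simpa using this
  set r : ℝ := RCLike.re (⟪x, Pinv x⟫_ℂ) with hr
  -- r ≤ 1 from positivity of P - x x*
  have hr1 : r ≤ 1 := by
    have hpos := hPx.2 (Pinv x)
    rw [ContinuousLinearMap.reApplyInnerSelf] at hpos
    have hre : ((P - rankOne x) (Pinv x)) = x - (⟪x, Pinv x⟫_ℂ) • x := by
      simp [rankOne, hPPinv]
    set c : ℂ := ⟪x, Pinv x⟫_ℂ with hc
    rw [hre] at hpos
    have h2 : ⟪x - c • x, Pinv x⟫_ℂ = c - (starRingEnd ℂ) c * c := by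
      rw [inner_sub_left, inner_smul_left, ← hc]
    rw [h2] at hpos
    have h3 : RCLike.re (c - (starRingEnd ℂ) c * c) = c.re - (c.re ^ 2 + c.im ^ 2) := by
      simp only [map_sub, Complex.sub_re, Complex.mul_re, Complex.conj_re, Complex.conj_im,
        RCLike.re_to_complex]
      ring
    rw [h3] at hpos
    have hrc : r = c.re := hr
    rw [hrc]
    nlinarith [sq_nonneg c.im, sq_nonneg (c.re - 1)]
  have hnormP : ‖MF (Pinv x)‖ ^ 2 = r := by
    rw [← inner_self_eq_norm_sq (𝕜 := ℂ)]
    have : (⟪MF (Pinv x), MF (Pinv x)⟫_ℂ) = ⟪Pinv x, x⟫_ℂ := by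
      rw [← ContinuousLinearMap.adjoint_inner_right, hPapp, hPPinv]
    rw [this, hr, inner_re_symm]
  constructor
  · rintro ⟨hfx, hfn⟩
    refine ⟨f - MF (Pinv x), ?_, ?_, by abel⟩
    · intro x0
      rw [inner_sub_right, ← ContinuousLinearMap.adjoint_inner_right (A := MF) x0 f,
        ← ContinuousLinearMap.adjoint_inner_right, hfx, hPapp, hPPinv, sub_self]
    · have horth : (⟪MF (Pinv x), f - MF (Pinv x)⟫_ℂ) = 0 := by
        rw [inner_sub_right, ← ContinuousLinearMap.adjoint_inner_right (A := MF),
          ← ContinuousLinearMap.adjoint_inner_right (A := MF), hfx, hPapp, hPPinv, sub_self]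
      have hsum : ‖f‖ ^ 2 = ‖MF (Pinv x)‖ ^ 2 + ‖f - MF (Pinv x)‖ ^ 2 := by
        have := norm_add_sq (𝕜 := ℂ) (MF (Pinv x)) (f - MF (Pinv x))
        simpa [horth] using this
      have h1 : ‖f - MF (Pinv x)‖ ^ 2 ≤ 1 - r := by
        have hf2 : ‖f‖ ^ 2 ≤ 1 := by nlinarith [norm_nonneg f]
        nlinarith
      have := Real.sqrt_le_sqrt h1
      rwa [Real.sqrt_sq (norm_nonneg _)] at this
  · rintro ⟨h, horth, hnorm, hf⟩
    have hadjh : ContinuousLinearMap.adjoint MF h = 0 := by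
      apply ext_inner_left ℂ
      intro w
      rw [ContinuousLinearMap.adjoint_inner_right, horth w, inner_zero_right]
    constructor
    · rw [hf, map_add, hadjh, hPapp, hPPinv, add_zero]
    · have horth2 : (⟪MF (Pinv x), h⟫_ℂ) = 0 := horth (Pinv x)
      have hh2 : ‖h‖ ^ 2 ≤ 1 - r := by
        have := Real.sqrt_le_sqrt (le_of_eq (Real.sq_sqrt (by linarith : (0:ℝ) ≤ 1 - r)).symm)
        have h2 : ‖h‖ ^ 2 ≤ Real.sqrt (1 - r) ^ 2 :=
          pow_le_pow_left₀ (norm_nonneg _) hnorm 2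
        rw [Real.sq_sqrt (by linarith : (0:ℝ) ≤ 1 - r)] at h2
        exact h2
      have hsum : ‖f‖ ^ 2 = ‖MF (Pinv x)‖ ^ 2 + ‖h‖ ^ 2 := by
        rw [hf]
        have := norm_add_sq (𝕜 := ℂ) (MF (Pinv x)) h
        simpa [horth2] using this
      have : ‖f‖ ^ 2 ≤ 1 := by nlinarith
      nlinarith [norm_nonneg f]


end
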